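/- arXiv:1310.6019 — 2 statements merged into one kernel-verified Lean document; each statement's English description precedes it below -/
import Mathlib

section
/- Let p, m, i_p, i_e, j be natural numbers with i_e ≤ i_p, j ≥ 1, i_e + j ≤ m, and p − i_p > m − i_e. Then S(p, m, i_p + j, i_e + j) < S(p, m, i_p, i_e). (This follows by repeated application of the one-step statement that if p − i_p > m − i_e then S(p, m, i_p + 1, i_e + 1) < S(p, m, i_p, i_e), since the condition p − i_p > m − i_e is preserved when both i_p and i_e increase by 1.) -/
/-!
Pascal's rule in both factors shows that raising `i_p` and `i_e` by one lowers the numerator of the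
surprise value by exactly `C(i_p, i_e) · C(p - i_p - 1, m - i_e)`, which is positive under the
hypotheses; these hypotheses survive the shift, so the claim follows by induction on `j`.
-/

/-- The surprise value `S(p, m, i_p, i_e)`. -/
def surpriseVal (p m ip ie : ℕ) : ℚ :=
  (∑ i ∈ Finset.Icc ie m, (ip.choose i * (p - ip).choose (m - i) : ℚ)) / (p.choose m)

theorem sum_Icc_choose_mul_choose_succ (a b m : ℕ) {k : ℕ} (hk : k ≤ m) :
    ∑ i ∈ Finset.Icc k m, a.choose i * (b + 1).choose (m - i)
      = ∑ i ∈ Finset.Icc (k + 1) m, (a + 1).choose i * b.choose (m - i)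
        + a.choose k * b.choose (m - k) := by
  induction hk using Nat.decreasingInduction with
  | self => simp
  | of_succ k hkm ih =>
    have hsub : m - k = m - (k + 1) + 1 := by omega
    rw [← Finset.add_sum_Ioc_eq_sum_Icc hkm.le, ← Finset.Icc_add_one_left_eq_Ioc, ih,
      ← Finset.add_sum_Ioc_eq_sum_Icc (f := fun i ↦ (a + 1).choose i * b.choose (m - i)) hkm,
      ← Finset.Icc_add_one_left_eq_Ioc, hsub, Nat.choose_succ_succ b, Nat.choose_succ_succ a k]
    ring

theorem surpriseVal_eq_surpriseVal_succ_add {p m ip ie : ℕ} (hip : ip < p) (hie : ie ≤ m) :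
    surpriseVal p m ip ie = surpriseVal p m (ip + 1) (ie + 1)
      + ip.choose ie * (p - ip - 1).choose (m - ie) / p.choose m := by
  obtain ⟨b, hb⟩ : ∃ b, p - ip = b + 1 := ⟨p - ip - 1, by omega⟩
  have hb' : p - (ip + 1) = b := by omega
  have hnum := congrArg (Nat.cast : ℕ → ℚ) (sum_Icc_choose_mul_choose_succ ip b m hie)
  push_cast at hnum
  simp only [surpriseVal, hb, hb', Nat.add_sub_cancel, ← add_div]
  rw [← hnum]

theorem surpriseVal_succ_lt {p m ip ie : ℕ} (hie : ie ≤ ip) (hm : ie ≤ m)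
    (h : m - ie < p - ip) :
    surpriseVal p m (ip + 1) (ie + 1) < surpriseVal p m ip ie := by
  rw [surpriseVal_eq_surpriseVal_succ_add (ip := ip) (ie := ie) (by omega) hm,
    lt_add_iff_pos_right]
  have := Nat.choose_pos hie
  have := Nat.choose_pos (show m - ie ≤ p - ip - 1 by omega)
  have := Nat.choose_pos (show m ≤ p by omega)
  positivity

theorem stmt3 (p m ip ie j : ℕ) (h1 : ie ≤ ip) (h2 : 1 ≤ j) (h3 : ie + j ≤ m)
    (h4 : m - ie < p - ip) :
    surpriseVal p m (ip + j) (ie + j) < surpriseVal p m ip ie := by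
  induction j, h2 using Nat.le_induction with
  | base => exact surpriseVal_succ_lt h1 (by omega) h4
  | succ j _ ih =>
    calc surpriseVal p m (ip + j + 1) (ie + j + 1)
        < surpriseVal p m (ip + j) (ie + j) := surpriseVal_succ_lt (by omega) (by omega) (by omega)
      _ < surpriseVal p m ip ie := ih (by omega)
end

section
/- Let G be a finite simple graph that has at least one edge and is not a complete graph, and let ζ be a surprise-optimal clustering of G. Then i_e(ζ) > 0 and p − i_p(ζ) > m − i_e(ζ). -/
open Finset

variable {V : Type*} [Fintype V] [DecidableEq V]

open scoped Classical in
/-- The number of edges of `G`. -/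
noncomputable def numEdges (G : SimpleGraph V) : ℕ := G.edgeFinset.card

open scoped Classical in
/-- The number of intracluster edges of the clustering `ζ`, i.e. of edges of `G`
having both endpoints in the same cluster. -/
noncomputable def intraEdges (G : SimpleGraph V) (ζ : Finpartition (univ : Finset V)) : ℕ :=
  (G.edgeFinset.filter fun e => ∃ P ∈ ζ.parts, ∀ v ∈ e, v ∈ P).card

open scoped Classical in
/-- The number of intercluster edges of the clustering `ζ`, i.e. of edges of `G`
whose endpoints lie in different clusters. -/
noncomputable def interEdges (G : SimpleGraph V) (ζ : Finpartition (univ : Finset V)) : ℕ :=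
  (G.edgeFinset.filter fun e => ¬ ∃ P ∈ ζ.parts, ∀ v ∈ e, v ∈ P).card

/-- The number of intracluster vertex pairs of the clustering `ζ`. -/
def intraPairs (ζ : Finpartition (univ : Finset V)) : ℕ :=
  ∑ P ∈ ζ.parts, (P.card).choose 2

/-- The surprise of the clustering `ζ` of the graph `G`. -/
noncomputable def surprise (G : SimpleGraph V) (ζ : Finpartition (univ : Finset V)) : ℚ :=
  surpriseVal ((Fintype.card V).choose 2) (numEdges G) (intraPairs ζ) (intraEdges G ζ)

/-! If `i_e(ζ) = 0` or `p − i_p(ζ) ≤ m − i_e(ζ)`, every term of Vandermonde's identity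
`∑ᵢ C(i_p, i) C(p − i_p, m − i) = C(p, m)` with `i < i_e(ζ)` vanishes, so `S(ζ) = 1`. On the
other hand, making a single edge `{u, v}` the only non-singleton cluster gives
`i_p = i_e = 1` and surprise `C(p − 1, m − 1) / C(p, m) < 1`, because `m < p` when `G` is not
complete. -/

theorem Nat.choose_two_add_choose_two_le (a b : ℕ) :
    a.choose 2 + b.choose 2 ≤ (a + b).choose 2 := by
  rw [← Nat.cast_le (α := ℚ)]
  push_cast [Nat.cast_choose_two]
  nlinarith [mul_nonneg a.cast_nonneg (α := ℚ) b.cast_nonneg]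

theorem Finset.sum_choose_two_le_choose_two_sum {ι : Type*} (s : Finset ι) (f : ι → ℕ) :
    ∑ i ∈ s, (f i).choose 2 ≤ (∑ i ∈ s, f i).choose 2 := by
  induction s using Finset.cons_induction with
  | empty => simp
  | cons a s ha ih =>
    rw [sum_cons, sum_cons]
    exact (Nat.add_le_add_left ih _).trans (Nat.choose_two_add_choose_two_le _ _)

theorem surpriseVal_eq_one {p m ip ie : ℕ} (hip : ip ≤ p) (hmp : m ≤ p) (hie : ie ≤ m)
    (h : ie = 0 ∨ p - ip ≤ m - ie) : surpriseVal p m ip ie = 1 := by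
  have hpos : (0 : ℚ) < p.choose m := by exact_mod_cast Nat.choose_pos hmp
  rw [surpriseVal, div_eq_one_iff_eq hpos.ne']
  have hsum : ∑ i ∈ Icc ie m, (ip.choose i * (p - ip).choose (m - i) : ℚ)
      = ∑ ij ∈ antidiagonal m, (ip.choose ij.1 * (p - ip).choose ij.2 : ℚ) := by
    rw [Nat.sum_antidiagonal_eq_sum_range_succ_mk, Nat.range_succ_eq_Icc_zero]
    refine sum_subset (fun i hi => by simp only [mem_Icc] at hi ⊢; omega) fun i hi hi' => ?_
    simp only [mem_Icc] at hi hi'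
    rw [Nat.choose_eq_zero_of_lt (by omega : p - ip < m - i)]
    simp
  rw [hsum, ← Nat.add_sub_cancel' hip, Nat.add_sub_cancel_left, Nat.add_choose_eq]
  push_cast
  rfl

theorem surpriseVal_one_one_lt_one {p m : ℕ} (hm : 0 < m) (hmp : m < p) :
    surpriseVal p m 1 1 < 1 := by
  obtain ⟨p, rfl⟩ := Nat.exists_eq_add_one_of_ne_zero (by omega : p ≠ 0)
  obtain ⟨m, rfl⟩ := Nat.exists_eq_add_one_of_ne_zero hm.ne'
  have hsum : ∑ i ∈ Icc 1 (m + 1), ((1 : ℕ).choose i * (p + 1 - 1).choose (m + 1 - i) : ℚ)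
      = p.choose m := by
    rw [sum_eq_single_of_mem 1 (by simp)]
    · simp
    · intro i hi hne
      rw [Nat.choose_eq_zero_of_lt (by simp only [mem_Icc] at hi; omega)]
      simp
  have hlt : p.choose m < (p + 1).choose (m + 1) := by
    rw [Nat.choose_succ_succ']
    have := Nat.choose_pos (by omega : m + 1 ≤ p)
    omega
  rw [surpriseVal, hsum, div_lt_one (by exact_mod_cast Nat.choose_pos hmp.le)]
  exact_mod_cast hlt

def pairClustering (u v : V) : Finpartition (univ : Finset V) :=
  (⊥ : Finpartition (univ \ {u, v})).extend (insert_nonempty u {v}).ne_empty sdiff_disjoint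
    (sdiff_sup_cancel (subset_univ _))

theorem mem_pairClustering_parts {u v : V} {P : Finset V} :
    P ∈ (pairClustering u v).parts ↔ P = {u, v} ∨ ∃ w ∉ ({u, v} : Finset V), {w} = P := by
  simp [pairClustering]

theorem intraPairs_pairClustering {u v : V} (huv : u ≠ v) :
    intraPairs (pairClustering u v) = 1 := by
  rw [intraPairs, pairClustering, Finpartition.extend_parts, sum_insert, Finpartition.parts_bot,
    sum_map]
  · simp [huv]
  · rw [Finpartition.mem_bot_iff]
    rintro ⟨w, hw, h⟩
    exact (mem_sdiff.1 hw).2 (h ▸ mem_singleton_self w)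

theorem intraEdges_pairClustering (G : SimpleGraph V) {u v : V} (huv : G.Adj u v) :
    intraEdges G (pairClustering u v) = 1 := by
  rw [intraEdges, card_eq_one]
  refine ⟨s(u, v), ?_⟩
  ext e
  induction e using Sym2.ind with
  | _ x y =>
    simp only [mem_filter, SimpleGraph.mem_edgeFinset, SimpleGraph.mem_edgeSet, mem_singleton,
      mem_pairClustering_parts, Sym2.mem_iff, forall_eq_or_imp, forall_eq]
    constructor
    · rintro ⟨hxy, P, rfl | ⟨w, -, rfl⟩, hx, hy⟩
      · simp only [mem_insert, mem_singleton] at hx hy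
        rcases hx with rfl | rfl <;> rcases hy with rfl | rfl <;> simp_all [Sym2.eq_swap]
      · exact absurd ((mem_singleton.1 hx).trans (mem_singleton.1 hy).symm) hxy.ne
    · intro h
      refine ⟨?_, {u, v}, Or.inl rfl, ?_⟩
      · rwa [← SimpleGraph.mem_edgeSet, h]
      · rcases Sym2.eq_iff.1 h with ⟨rfl, rfl⟩ | ⟨rfl, rfl⟩ <;> simp

theorem intraPairs_le_choose_two (ζ : Finpartition (univ : Finset V)) :
    intraPairs ζ ≤ (Fintype.card V).choose 2 := by
  rw [← card_univ, ← ζ.sum_card_parts]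
  exact sum_choose_two_le_choose_two_sum ζ.parts card

theorem numEdges_lt_choose_two {G : SimpleGraph V} (hG : G ≠ ⊤) :
    numEdges G < (Fintype.card V).choose 2 := by
  classical
  rw [numEdges, ← SimpleGraph.card_edgeFinset_top_eq_card_choose_two]
  exact card_lt_card (SimpleGraph.edgeFinset_strict_mono (lt_top_iff_ne_top.2 hG))

theorem intraEdges_le_numEdges (G : SimpleGraph V) (ζ : Finpartition (univ : Finset V)) :
    intraEdges G ζ ≤ numEdges G := by
  classical
  exact card_filter_le _ _

theorem surprise_eq_one {G : SimpleGraph V} (hG : G ≠ ⊤) {ζ : Finpartition (univ : Finset V)}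
    (h : intraEdges G ζ = 0 ∨
      (Fintype.card V).choose 2 - intraPairs ζ ≤ numEdges G - intraEdges G ζ) :
    surprise G ζ = 1 :=
  surpriseVal_eq_one (intraPairs_le_choose_two ζ) (numEdges_lt_choose_two hG).le
    (intraEdges_le_numEdges G ζ) h

theorem surprise_pairClustering_lt_one {G : SimpleGraph V} (hG : G ≠ ⊤) {u v : V}
    (huv : G.Adj u v) : surprise G (pairClustering u v) < 1 := by
  classical
  rw [surprise, intraPairs_pairClustering huv.ne, intraEdges_pairClustering G huv]
  refine surpriseVal_one_one_lt_one ?_ (numEdges_lt_choose_two hG)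
  rw [numEdges, card_pos]
  exact ⟨s(u, v), G.mem_edgeFinset.2 huv⟩

/-- For a surprise-optimal clustering `ζ` of a graph with at least one edge that is not
complete, `i_e(ζ) > 0` and `p − i_p(ζ) > m − i_e(ζ)`. -/
theorem stmt7 (G : SimpleGraph V) (hE : G.edgeSet.Nonempty) (hnc : G ≠ ⊤)
    (ζ : Finpartition (univ : Finset V))
    (hopt : ∀ ζ' : Finpartition (univ : Finset V), surprise G ζ ≤ surprise G ζ') :
    0 < intraEdges G ζ ∧
      numEdges G - intraEdges G ζ < (Fintype.card V).choose 2 - intraPairs ζ := by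
  obtain ⟨e, he⟩ := hE
  induction e using Sym2.ind with
  | _ u v =>
    by_contra hcon
    have hζ : surprise G ζ = 1 := surprise_eq_one hnc (by omega)
    linarith [hopt (pairClustering u v), surprise_pairClustering_lt_one hnc he]
end
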